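/- arXiv:1801.10013 — 5 statements merged into one kernel-verified Lean document; each statement's English description precedes it below -/
import Mathlib

section
/- Let U = {(x,y,t) ∈ ℝ³ : y² − 4xt > 0} and define H(x,y,t) = (y² − 4xt)^{−1/2} on U. Then H satisfies both differential constraints on U: the nonlinear constraint H_{xx} H_y − H_{xy} H_x = 0 and the wave equation H_{xt} − H_{yy} = 0. -/
/-- Partial derivative of `f : ℝ³ → ℝ` in direction `v`, as a function. -/
noncomputable def pd (v : ℝ × ℝ × ℝ) (f : ℝ × ℝ × ℝ → ℝ) : ℝ × ℝ × ℝ → ℝ :=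
  fun q => fderiv ℝ f q v

/-- ∂/∂x for functions of (x, y, t). -/
noncomputable def px : (ℝ × ℝ × ℝ → ℝ) → ℝ × ℝ × ℝ → ℝ := pd (1, 0, 0)
/-- ∂/∂y for functions of (x, y, t). -/
noncomputable def py : (ℝ × ℝ × ℝ → ℝ) → ℝ × ℝ × ℝ → ℝ := pd (0, 1, 0)
/-- ∂/∂t for functions of (x, y, t). -/
noncomputable def pt : (ℝ × ℝ × ℝ → ℝ) → ℝ × ℝ × ℝ → ℝ := pd (0, 0, 1)

/-!
With `Q = y² - 4xt`, the chain rule gives `H_x = 2t Q^(-3/2)` and `H_y = -y Q^(-3/2)`, and one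
more differentiation gives `H_xx = 12t² Q^(-5/2)`, `H_xy = -6ty Q^(-5/2)`,
`H_xt = 2Q^(-3/2) + 12xt Q^(-5/2)` and `H_yy = -Q^(-3/2) + 3y² Q^(-5/2)`.
The first constraint is then a polynomial identity, and the wave equation reduces to
`3 Q^(-3/2) = 3 (y² - 4xt) Q^(-5/2)`.
-/

open Filter Topology

section PartialDerivative

variable {f g : ℝ × ℝ × ℝ → ℝ} {q : ℝ × ℝ × ℝ}

lemma pd_congr_of_eventuallyEq (v : ℝ × ℝ × ℝ) (h : f =ᶠ[𝓝 q] g) : pd v f q = pd v g q := by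
  simp only [pd, h.fderiv_eq]

lemma pd_neg (v : ℝ × ℝ × ℝ) : pd v (fun p => -f p) q = -pd v f q := by
  simp only [pd, fderiv_fun_neg, neg_apply]

lemma pd_const_mul (v : ℝ × ℝ × ℝ) (c : ℝ) (hf : DifferentiableAt ℝ f q) :
    pd v (fun p => c * f p) q = c * pd v f q := by
  simp only [pd, fderiv_const_mul hf, smul_apply, smul_eq_mul]

lemma pd_mul (v : ℝ × ℝ × ℝ) (hf : DifferentiableAt ℝ f q) (hg : DifferentiableAt ℝ g q) :
    pd v (fun p => f p * g p) q = pd v f q * g q + f q * pd v g q := by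
  simp only [pd, fderiv_fun_mul hf hg, add_apply, smul_apply, smul_eq_mul]
  ring

lemma pd_rpow (v : ℝ × ℝ × ℝ) (r : ℝ) (hf : DifferentiableAt ℝ f q) (hpos : 0 < f q) :
    pd v (fun p => f p ^ r) q = r * f q ^ (r - 1) * pd v f q := by
  rw [pd, (hf.hasFDerivAt.rpow_const (Or.inl hpos.ne')).fderiv]
  simp [pd]

lemma pd_snd_fst (v q : ℝ × ℝ × ℝ) : pd v (fun p => p.2.1) q = v.2.1 := by
  rw [pd, (hasFDerivAt_snd (𝕜 := ℝ) (p := q)).fst.fderiv]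
  rfl

lemma pd_snd_snd (v q : ℝ × ℝ × ℝ) : pd v (fun p => p.2.2) q = v.2.2 := by
  rw [pd, (hasFDerivAt_snd (𝕜 := ℝ) (p := q)).snd.fderiv]
  rfl

end PartialDerivative

def quadForm (q : ℝ × ℝ × ℝ) : ℝ := q.2.1 ^ 2 - 4 * q.1 * q.2.2

noncomputable def fundamentalSolution : ℝ × ℝ × ℝ → ℝ := fun q => quadForm q ^ (-(1 / 2 : ℝ))

lemma differentiable_quadForm : Differentiable ℝ quadForm := by
  unfold quadForm
  fun_prop

lemma pd_quadForm (v q : ℝ × ℝ × ℝ) :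
    pd v quadForm q = 2 * q.2.1 * v.2.1 - 4 * (q.2.2 * v.1 + q.1 * v.2.2) := by
  have hx := hasFDerivAt_fst (𝕜 := ℝ) (p := q)
  have hy := (hasFDerivAt_snd (𝕜 := ℝ) (p := q)).fst
  have ht := (hasFDerivAt_snd (𝕜 := ℝ) (p := q)).snd
  have h : HasFDerivAt quadForm _ q := (hy.pow 2).sub ((hx.const_mul 4).mul ht)
  rw [pd, h.fderiv]
  simp
  ring

lemma eventually_quadForm_pos {q : ℝ × ℝ × ℝ} (hq : 0 < quadForm q) :
    ∀ᶠ p in 𝓝 q, 0 < quadForm p :=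
  continuousAt_const.eventually_lt differentiable_quadForm.continuous.continuousAt hq

section

variable {q : ℝ × ℝ × ℝ}

lemma differentiableAt_quadForm_rpow (r : ℝ) (hq : 0 < quadForm q) :
    DifferentiableAt ℝ (fun p => quadForm p ^ r) q :=
  differentiable_quadForm.differentiableAt.rpow_const (Or.inl hq.ne')

lemma pd_quadForm_rpow (v : ℝ × ℝ × ℝ) (r : ℝ) (hq : 0 < quadForm q) :
    pd v (fun p => quadForm p ^ r) q = r * quadForm q ^ (r - 1) * pd v quadForm q :=
  pd_rpow v r differentiable_quadForm.differentiableAt hq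

lemma px_fundamentalSolution (hq : 0 < quadForm q) :
    px fundamentalSolution q = 2 * (q.2.2 * quadForm q ^ (-(3 / 2) : ℝ)) := by
  unfold px fundamentalSolution
  rw [pd_quadForm_rpow _ _ hq, pd_quadForm]
  norm_num
  ring

lemma py_fundamentalSolution (hq : 0 < quadForm q) :
    py fundamentalSolution q = -(q.2.1 * quadForm q ^ (-(3 / 2) : ℝ)) := by
  unfold py fundamentalSolution
  rw [pd_quadForm_rpow _ _ hq, pd_quadForm]
  norm_num
  ring

lemma pd_px_fundamentalSolution (v : ℝ × ℝ × ℝ) (hq : 0 < quadForm q) :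
    pd v (px fundamentalSolution) q = 2 * (v.2.2 * quadForm q ^ (-(3 / 2) : ℝ)
      + q.2.2 * (-(3 / 2) * quadForm q ^ (-(3 / 2) - 1 : ℝ) * pd v quadForm q)) := by
  have hloc : px fundamentalSolution =ᶠ[𝓝 q] fun p => 2 * (p.2.2 * quadForm p ^ (-(3 / 2) : ℝ)) :=
    (eventually_quadForm_pos hq).mono fun p hp => px_fundamentalSolution hp
  have hQ := differentiableAt_quadForm_rpow (-(3 / 2)) hq
  rw [pd_congr_of_eventuallyEq v hloc, pd_const_mul _ _ (differentiableAt_snd.snd.fun_mul hQ),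
    pd_mul _ (by fun_prop) hQ, pd_snd_snd, pd_quadForm_rpow _ _ hq]

lemma pd_py_fundamentalSolution (v : ℝ × ℝ × ℝ) (hq : 0 < quadForm q) :
    pd v (py fundamentalSolution) q = -(v.2.1 * quadForm q ^ (-(3 / 2) : ℝ)
      + q.2.1 * (-(3 / 2) * quadForm q ^ (-(3 / 2) - 1 : ℝ) * pd v quadForm q)) := by
  have hloc : py fundamentalSolution =ᶠ[𝓝 q] fun p => -(p.2.1 * quadForm p ^ (-(3 / 2) : ℝ)) :=
    (eventually_quadForm_pos hq).mono fun p hp => py_fundamentalSolution hp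
  have hQ := differentiableAt_quadForm_rpow (-(3 / 2)) hq
  rw [pd_congr_of_eventuallyEq v hloc, pd_neg, pd_mul _ (by fun_prop) hQ, pd_snd_fst,
    pd_quadForm_rpow _ _ hq]

end

/-- The fundamental solution `H = (y² - 4xt)^(-1/2)` satisfies both differential
constraints `H_{xx} H_y - H_{xy} H_x = 0` and `H_{xt} - H_{yy} = 0` on
`U = {y² - 4xt > 0}`. -/
theorem stmt2 :
    let U : Set (ℝ × ℝ × ℝ) := {q | q.2.1 ^ 2 - 4 * q.1 * q.2.2 > 0}
    let H : ℝ × ℝ × ℝ → ℝ := fun q => (q.2.1 ^ 2 - 4 * q.1 * q.2.2) ^ (-(1 / 2 : ℝ))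
    ∀ q ∈ U,
      px (px H) q * py H q - py (px H) q * px H q = 0 ∧
      pt (px H) q - py (py H) q = 0 := by
  intro U H q hq
  change 0 < quadForm q at hq
  have hxx : px (px fundamentalSolution) q = _ := pd_px_fundamentalSolution (1, 0, 0) hq
  have hxy : py (px fundamentalSolution) q = _ := pd_px_fundamentalSolution (0, 1, 0) hq
  have hxt : pt (px fundamentalSolution) q = _ := pd_px_fundamentalSolution (0, 0, 1) hq
  have hyy : py (py fundamentalSolution) q = _ := pd_py_fundamentalSolution (0, 1, 0) hq
  have hpow : quadForm q ^ (-(3 / 2) : ℝ) =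
      (q.2.1 ^ 2 - 4 * q.1 * q.2.2) * quadForm q ^ (-(3 / 2) - 1 : ℝ) := by
    conv_lhs => rw [show (-(3 / 2) : ℝ) = 1 + (-(3 / 2) - 1) by norm_num,
      Real.rpow_one_add' hq.le (by norm_num)]
    rfl
  rw [show H = fundamentalSolution from rfl, hxx, hxy, hxt, hyy,
    px_fundamentalSolution hq, py_fundamentalSolution hq]
  simp only [pd_quadForm]
  constructor
  · ring
  · linear_combination 3 * hpow
end

section
/- Let J, K ⊆ ℝ be open intervals, let A : (0,∞) × K → ℝ be C³ and B : J × K → ℝ be C³ with B_{yyy}(y,t) ≠ 0 for all (y,t) ∈ J × K. Suppose G(p,y,t) = A(p,t) + p·B(y,t) satisfies the G-equation G_{yp}² − G_{yy} G_{pp} − G_{pt} = 0 for all (p,y,t) ∈ (0,∞) × J × K. Then there exist a constant μ ∈ ℝ and functions κ, ρ : K → ℝ such that A(p,t) = μ(p·ln p − p) + κ(t)·p + ρ(t) for all (p,t) ∈ (0,∞) × K. -/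
/-- Partial derivative of `f : ℝ² → ℝ` in direction `v`, as a function. -/
noncomputable def pd2 (v : ℝ × ℝ) (f : ℝ × ℝ → ℝ) : ℝ × ℝ → ℝ :=
  fun z => fderiv ℝ f z v

/-- Derivative in the first coordinate (i.e. `p` for `A(p,t)`, `y` for `B(y,t)`). -/
noncomputable def p1 : (ℝ × ℝ → ℝ) → ℝ × ℝ → ℝ := pd2 (1, 0)
/-- Derivative in the second coordinate (i.e. `t`). -/
noncomputable def p2 : (ℝ × ℝ → ℝ) → ℝ × ℝ → ℝ := pd2 (0, 1)

open Filter Topology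

@[simp] theorem p1_zero : p1 0 = 0 := by
  ext z
  simp [p1, pd2]

@[simp] theorem p2_zero : p2 0 = 0 := by
  ext z
  simp [p2, pd2]

theorem Filter.EventuallyEq.pd_eq {f g : ℝ × ℝ × ℝ → ℝ} {r : ℝ × ℝ × ℝ} (h : f =ᶠ[𝓝 r] g)
    (v : ℝ × ℝ × ℝ) :
    pd v f r = pd v g r := by
  simp only [pd, h.fderiv_eq]

theorem ContDiffOn.pd2 {f : ℝ × ℝ → ℝ} {s : Set (ℝ × ℝ)} (hs : IsOpen s)
    {n m : WithTop ℕ∞} (hf : ContDiffOn ℝ n f s) (hmn : m + 1 ≤ n) (v : ℝ × ℝ) :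
    ContDiffOn ℝ m (pd2 v f) s :=
  (hf.fderiv_of_isOpen hs hmn).clm_apply contDiffOn_const

theorem ContDiffOn.differentiableAt_of_isOpen {f : ℝ × ℝ → ℝ} {s : Set (ℝ × ℝ)} (hs : IsOpen s)
    {n : WithTop ℕ∞} (hf : ContDiffOn ℝ n f s) (hn : n ≠ 0) {z : ℝ × ℝ} (hz : z ∈ s) :
    DifferentiableAt ℝ f z :=
  (hf.differentiableOn hn).differentiableAt (hs.mem_nhds hz)

theorem pd2_comm {f : ℝ × ℝ → ℝ} {z : ℝ × ℝ} (hf : ContDiffAt ℝ 2 f z) (v w : ℝ × ℝ) :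
    pd2 v (pd2 w f) z = pd2 w (pd2 v f) z := by
  have hdiff : DifferentiableAt ℝ (fderiv ℝ f) z :=
    (hf.fderiv_right le_rfl).differentiableAt one_ne_zero
  have hpd2 : ∀ u u' : ℝ × ℝ, pd2 u (pd2 u' f) z = fderiv ℝ (fderiv ℝ f) z u u' := fun u u' => by
    change fderiv ℝ (fun y => fderiv ℝ f y u') z u = _
    rw [fderiv_clm_apply hdiff (differentiableAt_const u')]
    simp
  rw [hpd2, hpd2]
  exact hf.isSymmSndFDerivAt (by simp) v w

theorem hasDerivAt_p1 {F : ℝ × ℝ → ℝ} {a b : ℝ} (hF : DifferentiableAt ℝ F (a, b)) :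
    HasDerivAt (fun x => F (x, b)) (p1 F (a, b)) a :=
  hF.hasFDerivAt.comp_hasDerivAt a ((hasDerivAt_id a).prodMk (hasDerivAt_const a b))

theorem hasDerivAt_p2 {F : ℝ × ℝ → ℝ} {a b : ℝ} (hF : DifferentiableAt ℝ F (a, b)) :
    HasDerivAt (fun x => F (a, x)) (p2 F (a, b)) b :=
  hF.hasFDerivAt.comp_hasDerivAt b ((hasDerivAt_const b a).prodMk (hasDerivAt_id b))

theorem HasDerivAt.eq_zero_of_forall_mem_eq {f : ℝ → ℝ} {f' x : ℝ} {s : Set ℝ}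
    (hf : HasDerivAt f f' x) (hs : s ∈ 𝓝 x) (hc : ∀ y ∈ s, f y = f x) : f' = 0 :=
  IsLocalMax.hasDerivAt_eq_zero (Filter.mem_of_superset hs fun y hy => (hc y hy).le) hf

theorem exists_ne_of_p1_ne_zero {F : ℝ × ℝ → ℝ} {J : Set ℝ} {y₀ t : ℝ} (hJ : J ∈ 𝓝 y₀)
    (hF : DifferentiableAt ℝ F (y₀, t)) (h : p1 F (y₀, t) ≠ 0) :
    ∃ y ∈ J, F (y, t) ≠ F (y₀, t) := by
  by_contra! hc
  exact h ((hasDerivAt_p1 hF).eq_zero_of_forall_mem_eq hJ hc)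

theorem IsOpen.exists_eq_add_of_hasDerivAt {s : Set ℝ} (hs : IsOpen s) (hs' : IsPreconnected s)
    {f g h : ℝ → ℝ} (hf : ∀ x ∈ s, HasDerivAt f (h x) x) (hg : ∀ x ∈ s, HasDerivAt g (h x) x) :
    ∃ a, ∀ x ∈ s, f x = g x + a :=
  hs.exists_eq_add_of_deriv_eq hs' (fun x hx => (hf x hx).differentiableAt.differentiableWithinAt)
    (fun x hx => (hg x hx).differentiableAt.differentiableWithinAt)
    (fun x hx => by rw [(hf x hx).deriv, (hg x hx).deriv])

theorem eq_xlogx_of_hasDerivAt {f f' : ℝ → ℝ} {μ : ℝ}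
    (hf : ∀ x > 0, HasDerivAt f (f' x) x) (hf' : ∀ x > 0, HasDerivAt f' (μ / x) x) {x : ℝ}
    (hx : 0 < x) : f x = μ * (x * Real.log x - x) + f' 1 * x + (f 1 + μ - f' 1) := by
  obtain ⟨κ, hκ⟩ := isOpen_Ioi.exists_eq_add_of_hasDerivAt isPreconnected_Ioi (fun x hx => hf' x hx)
    fun x (hx : 0 < x) =>
      ((Real.hasDerivAt_log hx.ne').const_mul μ).congr_deriv (div_eq_mul_inv ..).symm
  obtain ⟨ρ, hρ⟩ := isOpen_Ioi.exists_eq_add_of_hasDerivAt isPreconnected_Ioi (fun x hx => hf x hx)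
    (g := fun x => μ * (x * Real.log x - x) + κ * x) fun x (hx : 0 < x) => by
      have hlog := (hasDerivAt_id x).mul (Real.hasDerivAt_log hx.ne')
      refine ((hlog.sub (hasDerivAt_id x)).const_mul μ |>.add ((hasDerivAt_id x).const_mul κ))
        |>.congr_deriv ?_
      simp [hκ x hx, hx.ne']
  have h1 := hκ 1 (Set.mem_Ioi.2 one_pos)
  have h2 := hρ 1 (Set.mem_Ioi.2 one_pos)
  simp only [Real.log_one, mul_zero, zero_add] at h1 h2
  rw [hρ x hx, h1, h2]
  ring

theorem eq_and_eq_of_mul_add_eq {X Y : Type*} {s : Set X} {T : Set Y} {u v : X → ℝ}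
    {c d : Y → ℝ} (h : ∀ x ∈ s, ∀ y ∈ T, u x * d y + v x = c y) {y₀ y₁ : Y} (hy₀ : y₀ ∈ T)
    (hy₁ : y₁ ∈ T) (hd : d y₁ ≠ d y₀) {x x' : X} (hx : x ∈ s) (hx' : x' ∈ s) :
    u x = u x' ∧ v x = v x' := by
  have hu : (u x - u x') * (d y₁ - d y₀) = 0 := by
    linear_combination h x hx y₁ hy₁ - h x hx y₀ hy₀ - h x' hx' y₁ hy₁ + h x' hx' y₀ hy₀
  have hu' : u x = u x' := sub_eq_zero.mp ((mul_eq_zero.mp hu).resolve_right (sub_ne_zero.mpr hd))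
  exact ⟨hu', by linear_combination h x hx y₀ hy₀ - h x' hx' y₀ hy₀ - d y₀ * hu'⟩

/-- `G = A(p,t) + p B(y,t)` is `ansatz A B 0`; the extra term `M (y, t)` makes this class
closed under `px`, `py` and `pt`. -/
noncomputable def ansatz (F H M : ℝ × ℝ → ℝ) : ℝ × ℝ × ℝ → ℝ :=
  fun q => F (q.1, q.2.2) + q.1 * H q.2 + M q.2

section ansatz

variable {F H M : ℝ × ℝ → ℝ} {r : ℝ × ℝ × ℝ}

theorem pd_ansatz (hF : DifferentiableAt ℝ F (r.1, r.2.2)) (hH : DifferentiableAt ℝ H r.2)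
    (hM : DifferentiableAt ℝ M r.2) (v : ℝ × ℝ × ℝ) :
    pd v (ansatz F H M) r = fderiv ℝ F (r.1, r.2.2) (v.1, v.2.2)
      + (v.1 * H r.2 + r.1 * fderiv ℝ H r.2 v.2) + fderiv ℝ M r.2 v.2 := by
  have hπ : HasFDerivAt (fun q : ℝ × ℝ × ℝ => (q.1, q.2.2))
      ((ContinuousLinearMap.fst ℝ ℝ (ℝ × ℝ)).prod
        ((ContinuousLinearMap.snd ℝ ℝ ℝ).comp (ContinuousLinearMap.snd ℝ ℝ (ℝ × ℝ)))) r :=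
    hasFDerivAt_fst.prodMk (hasFDerivAt_snd.comp r hasFDerivAt_snd)
  have : HasFDerivAt (ansatz F H M) _ r := ((hF.hasFDerivAt.comp r hπ).add
    (hasFDerivAt_fst.mul (hH.hasFDerivAt.comp r hasFDerivAt_snd))).add
    (hM.hasFDerivAt.comp r hasFDerivAt_snd)
  rw [pd, this.fderiv]
  simp only [add_apply, ContinuousLinearMap.comp_apply,
    ContinuousLinearMap.prod_apply, ContinuousLinearMap.coe_fst', ContinuousLinearMap.coe_snd',
    smul_apply, smul_eq_mul, Function.comp_apply]
  ring

theorem px_ansatz (hF : DifferentiableAt ℝ F (r.1, r.2.2)) (hH : DifferentiableAt ℝ H r.2)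
    (hM : DifferentiableAt ℝ M r.2) : px (ansatz F H M) r = ansatz (p1 F) 0 H r := by
  simp [px, pd_ansatz hF hH hM, ansatz, p1, pd2, Prod.mk_zero_zero]

theorem py_ansatz (hF : DifferentiableAt ℝ F (r.1, r.2.2)) (hH : DifferentiableAt ℝ H r.2)
    (hM : DifferentiableAt ℝ M r.2) : py (ansatz F H M) r = ansatz 0 (p1 H) (p1 M) r := by
  simp [py, pd_ansatz hF hH hM, ansatz, p1, pd2, Prod.mk_zero_zero]

theorem pt_ansatz (hF : DifferentiableAt ℝ F (r.1, r.2.2)) (hH : DifferentiableAt ℝ H r.2)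
    (hM : DifferentiableAt ℝ M r.2) :
    pt (ansatz F H M) r = ansatz (p2 F) (p2 H) (p2 M) r := by
  simp [pt, pd_ansatz hF hH hM, ansatz, p2, pd2]

end ansatz

theorem gEquation_ansatz {V W : Set (ℝ × ℝ)} (hV : IsOpen V) (hW : IsOpen W)
    {A B : ℝ × ℝ → ℝ} (hA : ContDiffOn ℝ 2 A V) (hB : ContDiffOn ℝ 2 B W) {p y t : ℝ}
    (hpt : (p, t) ∈ V) (hyt : (y, t) ∈ W) :
    px (py (ansatz A B 0)) (p, y, t) ^ 2
        - py (py (ansatz A B 0)) (p, y, t) * px (px (ansatz A B 0)) (p, y, t)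
        - pt (px (ansatz A B 0)) (p, y, t)
      = p1 B (y, t) ^ 2 - p * p1 (p1 B) (y, t) * p1 (p1 A) (p, t)
        - (p2 (p1 A) (p, t) + p2 B (y, t)) := by
  have hN : {q : ℝ × ℝ × ℝ | (q.1, q.2.2) ∈ V ∧ q.2 ∈ W} ∈ 𝓝 (p, y, t) :=
    ((hV.preimage (by fun_prop)).inter (hW.preimage continuous_snd)).mem_nhds ⟨hpt, hyt⟩
  have h0 : ∀ z, DifferentiableAt ℝ (0 : ℝ × ℝ → ℝ) z := fun _ => differentiableAt_const (0 : ℝ)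
  have hpx : px (ansatz A B 0) =ᶠ[𝓝 (p, y, t)] ansatz (p1 A) 0 B :=
    Filter.mem_of_superset hN fun q hq =>
      px_ansatz (hA.differentiableAt_of_isOpen hV two_ne_zero hq.1)
        (hB.differentiableAt_of_isOpen hW two_ne_zero hq.2) (h0 _)
  have hpy : py (ansatz A B 0) =ᶠ[𝓝 (p, y, t)] ansatz 0 (p1 B) 0 :=
    Filter.mem_of_superset hN fun q hq => by
      simpa using py_ansatz (hA.differentiableAt_of_isOpen hV two_ne_zero hq.1)
        (hB.differentiableAt_of_isOpen hW two_ne_zero hq.2) (h0 _)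
  have hA1 : DifferentiableAt ℝ (p1 A) (p, t) :=
    (hA.pd2 hV (by norm_num) _).differentiableAt_of_isOpen hV one_ne_zero hpt
  have hB0 : DifferentiableAt ℝ B (y, t) := hB.differentiableAt_of_isOpen hW two_ne_zero hyt
  have hB1 : DifferentiableAt ℝ (p1 B) (y, t) :=
    (hB.pd2 hW (by norm_num) _).differentiableAt_of_isOpen hW one_ne_zero hyt
  have hGyp : px (py (ansatz A B 0)) (p, y, t) = p1 B (y, t) :=
    calc px (py (ansatz A B 0)) (p, y, t) = px (ansatz 0 (p1 B) 0) (p, y, t) := hpy.pd_eq _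
      _ = p1 B (y, t) := by simp [px_ansatz (r := (p, y, t)) (h0 _) hB1 (h0 _), ansatz]
  have hGyy : py (py (ansatz A B 0)) (p, y, t) = p * p1 (p1 B) (y, t) :=
    calc py (py (ansatz A B 0)) (p, y, t) = py (ansatz 0 (p1 B) 0) (p, y, t) := hpy.pd_eq _
      _ = p * p1 (p1 B) (y, t) := by
        simp [py_ansatz (r := (p, y, t)) (h0 _) hB1 (h0 _), ansatz]
  have hGpp : px (px (ansatz A B 0)) (p, y, t) = p1 (p1 A) (p, t) :=
    calc px (px (ansatz A B 0)) (p, y, t) = px (ansatz (p1 A) 0 B) (p, y, t) := hpx.pd_eq _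
      _ = p1 (p1 A) (p, t) := by simp [px_ansatz (r := (p, y, t)) hA1 (h0 _) hB0, ansatz]
  have hGpt : pt (px (ansatz A B 0)) (p, y, t) = p2 (p1 A) (p, t) + p2 B (y, t) :=
    calc pt (px (ansatz A B 0)) (p, y, t) = pt (ansatz (p1 A) 0 B) (p, y, t) := hpx.pd_eq _
      _ = p2 (p1 A) (p, t) + p2 B (y, t) := by
        simp [pt_ansatz (r := (p, y, t)) hA1 (h0 _) hB0, ansatz]
  rw [hGyp, hGyy, hGpp, hGpt]

theorem exists_p1_p1_eq_div {K : Set ℝ} (hKo : IsOpen K) (hKc : K.OrdConnected) {A : ℝ × ℝ → ℝ}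
    (hA : ContDiffOn ℝ 3 A (Set.Ioi 0 ×ˢ K))
    (hsep : ∀ t ∈ K, ∀ p > 0, ∀ q > 0,
      p * p1 (p1 A) (p, t) = q * p1 (p1 A) (q, t) ∧ p2 (p1 A) (p, t) = p2 (p1 A) (q, t)) :
    ∃ μ, ∀ t ∈ K, ∀ p > 0, p1 (p1 A) (p, t) = μ / p := by
  have hV : IsOpen (Set.Ioi (0 : ℝ) ×ˢ K) := isOpen_Ioi.prod hKo
  have hA1 : ContDiffOn ℝ 2 (p1 A) (Set.Ioi 0 ×ˢ K) := hA.pd2 hV (by norm_num) _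
  have hApp : ∀ t ∈ K, HasDerivAt (fun s => p1 (p1 A) (1, s)) 0 t := fun t ht => by
    have hmem : ((1 : ℝ), t) ∈ Set.Ioi 0 ×ˢ K := ⟨Set.mem_Ioi.2 one_pos, ht⟩
    have hd : ∀ v, DifferentiableAt ℝ (pd2 v (p1 A)) (1, t) := fun v =>
      (hA1.pd2 hV (m := 1) (by norm_num) v).differentiableAt_of_isOpen hV one_ne_zero hmem
    have hAptp : p1 (p2 (p1 A)) (1, t) = 0 :=
      (hasDerivAt_p1 (hd _)).eq_zero_of_forall_mem_eq (Ioi_mem_nhds one_pos)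
        fun p hp => (hsep t ht p hp 1 one_pos).2
    have hcomm : p2 (p1 (p1 A)) (1, t) = p1 (p2 (p1 A)) (1, t) :=
      pd2_comm (hA1.contDiffAt (hV.mem_nhds hmem)) _ _
    rw [← hAptp, ← hcomm]
    exact hasDerivAt_p2 (hd _)
  obtain ⟨μ, hμ⟩ := hKo.exists_eq_add_of_hasDerivAt hKc.isPreconnected hApp
    fun t _ => hasDerivAt_const t (0 : ℝ)
  refine ⟨μ, fun t ht p hp => ?_⟩
  rw [eq_div_iff hp.ne', mul_comm, (hsep t ht p hp 1 one_pos).1, hμ t ht]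
  ring

theorem stmt9_general (J K : Set ℝ)
    (hJo : IsOpen J) (hJne : J.Nonempty)
    (hKo : IsOpen K) (hKc : K.OrdConnected)
    (A B : ℝ × ℝ → ℝ)
    (hA : ContDiffOn ℝ 3 A (Set.Ioi (0 : ℝ) ×ˢ K))
    (hB : ContDiffOn ℝ 3 B (J ×ˢ K))
    (hByyy : ∀ z ∈ J ×ˢ K, p1 (p1 (p1 B)) z ≠ 0)
    (hG : ∀ p > (0 : ℝ), ∀ y ∈ J, ∀ t ∈ K,
      (px (py (fun r => A (r.1, r.2.2) + r.1 * B (r.2.1, r.2.2))) (p, y, t)) ^ 2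
        - py (py (fun r => A (r.1, r.2.2) + r.1 * B (r.2.1, r.2.2))) (p, y, t)
            * px (px (fun r => A (r.1, r.2.2) + r.1 * B (r.2.1, r.2.2))) (p, y, t)
        - pt (px (fun r => A (r.1, r.2.2) + r.1 * B (r.2.1, r.2.2))) (p, y, t) = 0) :
    ∃ (μ : ℝ) (κ ρ : ℝ → ℝ), ∀ p > (0 : ℝ), ∀ t ∈ K,
      A (p, t) = μ * (p * Real.log p - p) + κ t * p + ρ t := by
  have hV : IsOpen (Set.Ioi (0 : ℝ) ×ˢ K) := isOpen_Ioi.prod hKo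
  have hW : IsOpen (J ×ˢ K) := hJo.prod hKo
  have hansatz : (fun r : ℝ × ℝ × ℝ => A (r.1, r.2.2) + r.1 * B (r.2.1, r.2.2)) = ansatz A B 0 :=
    funext fun r => by simp [ansatz]
  rw [hansatz] at hG
  have hA1 : ContDiffOn ℝ 2 (p1 A) (Set.Ioi 0 ×ˢ K) := hA.pd2 hV (by norm_num) _
  have hB11 : ContDiffOn ℝ 1 (p1 (p1 B)) (J ×ˢ K) :=
    (hB.pd2 hW (m := 2) (by norm_num) _).pd2 hW (by norm_num) _
  have hred : ∀ t ∈ K, ∀ p ∈ Set.Ioi (0 : ℝ), ∀ y ∈ J,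
      p * p1 (p1 A) (p, t) * p1 (p1 B) (y, t) + p2 (p1 A) (p, t) = p1 B (y, t) ^ 2 - p2 B (y, t) :=
    fun t ht p hp y hy => by
      have := gEquation_ansatz hV hW (hA.of_le (by norm_num)) (hB.of_le (by norm_num))
        (p := p) ⟨hp, ht⟩ ⟨hy, ht⟩
      linear_combination this - hG p hp y hy t ht
  have hsep : ∀ t ∈ K, ∀ p > 0, ∀ q > 0,
      p * p1 (p1 A) (p, t) = q * p1 (p1 A) (q, t) ∧ p2 (p1 A) (p, t) = p2 (p1 A) (q, t) := by
    intro t ht p hp q hq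
    obtain ⟨y₀, hy₀⟩ := hJne
    obtain ⟨y₁, hy₁, hne⟩ := exists_ne_of_p1_ne_zero (hJo.mem_nhds hy₀)
      (hB11.differentiableAt_of_isOpen hW one_ne_zero ⟨hy₀, ht⟩) (hByyy _ ⟨hy₀, ht⟩)
    exact eq_and_eq_of_mul_add_eq (u := fun p => p * p1 (p1 A) (p, t)) (hred t ht) hy₀ hy₁ hne
      hp hq
  obtain ⟨μ, hμ⟩ := exists_p1_p1_eq_div hKo hKc hA hsep
  refine ⟨μ, fun t => p1 A (1, t), fun t => A (1, t) + μ - p1 A (1, t), fun p hp t ht => ?_⟩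
  exact eq_xlogx_of_hasDerivAt (f := fun p => A (p, t)) (f' := fun p => p1 A (p, t))
    (fun x hx => hasDerivAt_p1 (hA.differentiableAt_of_isOpen hV (by norm_num) ⟨hx, ht⟩))
    (fun x hx => hμ t ht x hx ▸
      hasDerivAt_p1 (hA1.differentiableAt_of_isOpen hV two_ne_zero ⟨hx, ht⟩)) hp

/-- Class A branch: if `A(p,t)` is C³ on `(0,∞) × K`, `B(y,t)` is C³ on `J × K` with
`B_{yyy} ≠ 0` there (`J`, `K` open intervals, `J` nonempty), and
`G(p,y,t) = A(p,t) + p·B(y,t)` satisfies the G-equation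
`G_{yp}² - G_{yy} G_{pp} - G_{pt} = 0` on `(0,∞) × J × K`, then
`A(p,t) = μ(p ln p - p) + κ(t) p + ρ(t)` for a constant `μ` and functions `κ`, `ρ`. -/
theorem stmt9 (J K : Set ℝ)
    (hJo : IsOpen J) (hJc : J.OrdConnected) (hJne : J.Nonempty)
    (hKo : IsOpen K) (hKc : K.OrdConnected)
    (A B : ℝ × ℝ → ℝ)
    (hA : ContDiffOn ℝ 3 A (Set.Ioi (0 : ℝ) ×ˢ K))
    (hB : ContDiffOn ℝ 3 B (J ×ˢ K))
    (hByyy : ∀ z ∈ J ×ˢ K, p1 (p1 (p1 B)) z ≠ 0)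
    (hG : ∀ p > (0 : ℝ), ∀ y ∈ J, ∀ t ∈ K,
      (px (py (fun r => A (r.1, r.2.2) + r.1 * B (r.2.1, r.2.2))) (p, y, t)) ^ 2
        - py (py (fun r => A (r.1, r.2.2) + r.1 * B (r.2.1, r.2.2))) (p, y, t)
            * px (px (fun r => A (r.1, r.2.2) + r.1 * B (r.2.1, r.2.2))) (p, y, t)
        - pt (px (fun r => A (r.1, r.2.2) + r.1 * B (r.2.1, r.2.2))) (p, y, t) = 0) :
    ∃ (μ : ℝ) (κ ρ : ℝ → ℝ), ∀ p > (0 : ℝ), ∀ t ∈ K,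
      A (p, t) = μ * (p * Real.log p - p) + κ t * p + ρ t :=
  stmt9_general J K hJo hJne hKo hKc A B hA hB hByyy hG
end

section
/- Let J, K ⊆ ℝ be open intervals, μ ≠ 0 a constant, κ, ρ : K → ℝ differentiable functions, and B : J × K → ℝ a C² function. Set A(p,t) = μ(p·ln p − p) + κ(t)·p + ρ(t) and suppose G(p,y,t) = A(p,t) + p·B(y,t) satisfies the G-equation G_{yp}² − G_{yy} G_{pp} − G_{pt} = 0 for all (p,y,t) ∈ (0,∞) × J × K. Then the function β(y,t) = exp(−(B(y,t) + κ(t))/μ) satisfies the backwards heat equation β_t + μ·β_{yy} = 0 on J × K. -/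
open Real Filter Topology

section Calculus

variable {E : Type*} [NormedAddCommGroup E] [NormedSpace ℝ E]

theorem ContDiffAt.differentiableAt_fderiv_apply {f : E → ℝ} {x : E} (hf : ContDiffAt ℝ 2 f x)
    (v : E) : DifferentiableAt ℝ (fun y => fderiv ℝ f y v) x :=
  ((hf.fderiv_right (m := 1) (by norm_num)).clm_apply contDiffAt_const).differentiableAt
    one_ne_zero

theorem fderiv_fderiv_exp_apply {u : E → ℝ} {x : E} (hu : ∀ᶠ y in 𝓝 x, DifferentiableAt ℝ u y)
    {v : E} (hu' : DifferentiableAt ℝ (fun y => fderiv ℝ u y v) x) (w : E) :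
    fderiv ℝ (fun y => fderiv ℝ (fun z => exp (u z)) y v) x w =
      exp (u x) * (fderiv ℝ (fun y => fderiv ℝ u y v) x w + fderiv ℝ u x v * fderiv ℝ u x w) := by
  have hfirst : (fun y => fderiv ℝ (fun z => exp (u z)) y v) =ᶠ[𝓝 x]
      fun y => exp (u y) * fderiv ℝ u y v :=
    hu.mono fun y hy => by simp [fderiv_exp hy]
  have hprod : HasFDerivAt (fun y => exp (u y) * fderiv ℝ u y v)
      (exp (u x) • fderiv ℝ (fun y => fderiv ℝ u y v) x + fderiv ℝ u x v • exp (u x) • fderiv ℝ u x)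
      x :=
    hu.self_of_nhds.hasFDerivAt.exp.mul hu'.hasFDerivAt
  rw [hfirst.fderiv_eq, hprod.fderiv]
  simp only [add_apply, smul_apply, smul_eq_mul]
  ring

end Calculus

noncomputable def separatedG (μ : ℝ) (κ ρ : ℝ → ℝ) (B : ℝ × ℝ → ℝ) (r : ℝ × ℝ × ℝ) : ℝ :=
  μ * (r.1 * log r.1 - r.1) + κ r.2.2 * r.1 + ρ r.2.2 + r.1 * B (r.2.1, r.2.2)

section SeparatedG

variable {μ : ℝ} {κ ρ : ℝ → ℝ} {B : ℝ × ℝ → ℝ} {r : ℝ × ℝ × ℝ}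

theorem fderiv_separatedG_apply (hp : 0 < r.1) (hκ : DifferentiableAt ℝ κ r.2.2)
    (hρ : DifferentiableAt ℝ ρ r.2.2) (hB : DifferentiableAt ℝ B r.2) (v : ℝ × ℝ × ℝ) :
    fderiv ℝ (separatedG μ κ ρ B) r v =
      (μ * log r.1 + κ r.2.2 + B r.2) * v.1 + r.1 * fderiv ℝ B r.2 v.2
        + (r.1 * deriv κ r.2.2 + deriv ρ r.2.2) * v.2.2 := by
  have hfst : HasFDerivAt (fun s : ℝ × ℝ × ℝ => s.1) (ContinuousLinearMap.fst ℝ ℝ (ℝ × ℝ)) r :=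
    hasFDerivAt_fst
  have hyt : HasFDerivAt (fun s : ℝ × ℝ × ℝ => s.2) (ContinuousLinearMap.snd ℝ ℝ (ℝ × ℝ)) r :=
    hasFDerivAt_snd
  have ht := hasFDerivAt_snd.comp r hyt
  have hlog := (((hasDerivAt_mul_log hp.ne').sub (hasDerivAt_id r.1)).const_mul μ).comp_hasFDerivAt
    r hfst
  have hG : HasFDerivAt (separatedG μ κ ρ B) _ r :=
    ((hlog.add ((hκ.hasDerivAt.comp_hasFDerivAt r ht).mul hfst)).add
      (hρ.hasDerivAt.comp_hasFDerivAt r ht)).add (hfst.mul (hB.hasFDerivAt.comp r hyt))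
  rw [hG.fderiv]
  simp
  ring

theorem px_separatedG (hp : 0 < r.1) (hκ : DifferentiableAt ℝ κ r.2.2)
    (hρ : DifferentiableAt ℝ ρ r.2.2) (hB : DifferentiableAt ℝ B r.2) :
    px (separatedG μ κ ρ B) r = μ * log r.1 + κ r.2.2 + B r.2 := by
  simp [px, pd, fderiv_separatedG_apply hp hκ hρ hB, Prod.mk_zero_zero]

theorem py_separatedG (hp : 0 < r.1) (hκ : DifferentiableAt ℝ κ r.2.2)
    (hρ : DifferentiableAt ℝ ρ r.2.2) (hB : DifferentiableAt ℝ B r.2) :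
    py (separatedG μ κ ρ B) r = r.1 * p1 B r.2 := by
  simp [py, p1, pd, pd2, fderiv_separatedG_apply hp hκ hρ hB]

variable {J K : Set ℝ}

theorem separatedG_partials_eventuallyEq (hJ : IsOpen J) (hK : IsOpen K)
    (hκ : DifferentiableOn ℝ κ K) (hρ : DifferentiableOn ℝ ρ K)
    (hB : DifferentiableOn ℝ B (J ×ˢ K)) (hp : 0 < r.1) (hr : r.2 ∈ J ×ˢ K) :
    px (separatedG μ κ ρ B) =ᶠ[𝓝 r] (fun s => μ * log s.1 + κ s.2.2 + B s.2) ∧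
      py (separatedG μ κ ρ B) =ᶠ[𝓝 r] (fun s => s.1 * p1 B s.2) := by
  have hdom : ∀ᶠ s in 𝓝 r, 0 < s.1 ∧ s.2 ∈ J ×ˢ K :=
    ((isOpen_lt continuous_const continuous_fst).inter
      ((hJ.prod hK).preimage continuous_snd)).mem_nhds ⟨hp, hr⟩
  refine ⟨hdom.mono fun s ⟨hs, hs'⟩ => ?_, hdom.mono fun s ⟨hs, hs'⟩ => ?_⟩
  · exact px_separatedG hs (hκ.differentiableAt (hK.mem_nhds hs'.2))
      (hρ.differentiableAt (hK.mem_nhds hs'.2)) (hB.differentiableAt ((hJ.prod hK).mem_nhds hs'))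
  · exact py_separatedG hs (hκ.differentiableAt (hK.mem_nhds hs'.2))
      (hρ.differentiableAt (hK.mem_nhds hs'.2)) (hB.differentiableAt ((hJ.prod hK).mem_nhds hs'))

theorem fderiv_px_separatedG_apply (hJ : IsOpen J) (hK : IsOpen K) (hκ : DifferentiableOn ℝ κ K)
    (hρ : DifferentiableOn ℝ ρ K) (hB : DifferentiableOn ℝ B (J ×ˢ K)) (hp : 0 < r.1)
    (hr : r.2 ∈ J ×ˢ K) (v : ℝ × ℝ × ℝ) :
    fderiv ℝ (px (separatedG μ κ ρ B)) r v = μ / r.1 * v.1 + fderiv ℝ B r.2 v.2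
      + deriv κ r.2.2 * v.2.2 := by
  have hd : HasFDerivAt (fun s : ℝ × ℝ × ℝ => μ * log s.1 + κ s.2.2 + B s.2) _ r :=
    ((((hasDerivAt_log hp.ne').const_mul μ).comp_hasFDerivAt r hasFDerivAt_fst).add
      ((hκ.differentiableAt (hK.mem_nhds hr.2)).hasDerivAt.comp_hasFDerivAt r
        (hasFDerivAt_snd.comp r hasFDerivAt_snd))).add
      ((hB.differentiableAt ((hJ.prod hK).mem_nhds hr)).hasFDerivAt.comp r hasFDerivAt_snd)
  rw [(separatedG_partials_eventuallyEq hJ hK hκ hρ hB hp hr).1.fderiv_eq, hd.fderiv]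
  simp
  ring

theorem fderiv_py_separatedG_apply (hJ : IsOpen J) (hK : IsOpen K) (hκ : DifferentiableOn ℝ κ K)
    (hρ : DifferentiableOn ℝ ρ K) (hB : DifferentiableOn ℝ B (J ×ˢ K))
    (hB₁ : DifferentiableAt ℝ (p1 B) r.2) (hp : 0 < r.1) (hr : r.2 ∈ J ×ˢ K) (v : ℝ × ℝ × ℝ) :
    fderiv ℝ (py (separatedG μ κ ρ B)) r v = p1 B r.2 * v.1 + r.1 * fderiv ℝ (p1 B) r.2 v.2 := by
  have hd : HasFDerivAt (fun s : ℝ × ℝ × ℝ => s.1 * p1 B s.2) _ r :=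
    hasFDerivAt_fst.mul (hB₁.hasFDerivAt.comp r hasFDerivAt_snd)
  rw [(separatedG_partials_eventuallyEq hJ hK hκ hρ hB hp hr).2.fderiv_eq, hd.fderiv]
  simp
  ring

theorem gEquation_separatedG (hJ : IsOpen J) (hK : IsOpen K) (hκ : DifferentiableOn ℝ κ K)
    (hρ : DifferentiableOn ℝ ρ K) (hB : DifferentiableOn ℝ B (J ×ˢ K))
    (hB₁ : DifferentiableAt ℝ (p1 B) r.2) (hp : 0 < r.1) (hr : r.2 ∈ J ×ˢ K) :
    px (py (separatedG μ κ ρ B)) r ^ 2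
        - py (py (separatedG μ κ ρ B)) r * px (px (separatedG μ κ ρ B)) r
        - pt (px (separatedG μ κ ρ B)) r =
      p1 B r.2 ^ 2 - μ * p1 (p1 B) r.2 - deriv κ r.2.2 - p2 B r.2 := by
  have hpp : px (px (separatedG μ κ ρ B)) r = μ / r.1 := by
    show fderiv ℝ _ r (1, 0, 0) = _
    simp [fderiv_px_separatedG_apply hJ hK hκ hρ hB hp hr, Prod.mk_zero_zero]
  have hpt : pt (px (separatedG μ κ ρ B)) r = deriv κ r.2.2 + p2 B r.2 := by
    show fderiv ℝ _ r (0, 0, 1) = _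
    simp [fderiv_px_separatedG_apply hJ hK hκ hρ hB hp hr, p2, pd2, add_comm]
  have hyp : px (py (separatedG μ κ ρ B)) r = p1 B r.2 := by
    show fderiv ℝ _ r (1, 0, 0) = _
    simp [fderiv_py_separatedG_apply hJ hK hκ hρ hB hB₁ hp hr, Prod.mk_zero_zero]
  have hyy : py (py (separatedG μ κ ρ B)) r = r.1 * p1 (p1 B) r.2 := by
    show fderiv ℝ _ r (0, 1, 0) = _
    simp [fderiv_py_separatedG_apply hJ hK hκ hρ hB hB₁ hp hr, p1, pd2]
  rw [hpp, hpt, hyp, hyy]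
  field_simp
  ring

end SeparatedG

section ColeHopf

variable {J K : Set ℝ} {μ : ℝ} {κ : ℝ → ℝ} {B : ℝ × ℝ → ℝ} {z : ℝ × ℝ}

theorem fderiv_coleHopfExponent_apply (hκ : DifferentiableAt ℝ κ z.2)
    (hB : DifferentiableAt ℝ B z) (v : ℝ × ℝ) :
    fderiv ℝ (fun w => -(B w + κ w.2) / μ) z v = -(fderiv ℝ B z v + deriv κ z.2 * v.2) / μ := by
  have hd : HasFDerivAt (fun w : ℝ × ℝ => -(B w + κ w.2) * μ⁻¹) _ z :=
    ((hB.hasFDerivAt.add (hκ.hasDerivAt.comp_hasFDerivAt z hasFDerivAt_snd)).neg).mul_const μ⁻¹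
  simp_rw [div_eq_mul_inv]
  rw [hd.fderiv]
  simp
  ring

theorem backwardHeat_coleHopf (hJ : IsOpen J) (hK : IsOpen K) (hμ : μ ≠ 0)
    (hκ : DifferentiableOn ℝ κ K) (hB : ContDiffOn ℝ 2 B (J ×ˢ K)) (hz : z ∈ J ×ˢ K) :
    p2 (fun w => exp (-(B w + κ w.2) / μ)) z
        + μ * p1 (p1 (fun w => exp (-(B w + κ w.2) / μ))) z =
      exp (-(B z + κ z.2) / μ) / μ
        * (p1 B z ^ 2 - μ * p1 (p1 B) z - deriv κ z.2 - p2 B z) := by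
  set u : ℝ × ℝ → ℝ := fun w => -(B w + κ w.2) / μ
  have hU : IsOpen (J ×ˢ K) := hJ.prod hK
  have hdiff : ∀ w ∈ J ×ˢ K, DifferentiableAt ℝ κ w.2 ∧ DifferentiableAt ℝ B w := fun w hw =>
    ⟨hκ.differentiableAt (hK.mem_nhds hw.2),
      (hB.differentiableOn (by norm_num)).differentiableAt (hU.mem_nhds hw)⟩
  have hu : ∀ᶠ w in 𝓝 z, DifferentiableAt ℝ u w :=
    eventually_of_mem (hU.mem_nhds hz) fun w hw => by
      obtain ⟨hκw, hBw⟩ := hdiff w hw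
      fun_prop
  have hu₁ : p1 u =ᶠ[𝓝 z] fun w => -p1 B w / μ :=
    eventually_of_mem (hU.mem_nhds hz) fun w hw => by
      simp only [p1, pd2, u, fderiv_coleHopfExponent_apply (hdiff w hw).1 (hdiff w hw).2]
      simp
  have hB₁ : DifferentiableAt ℝ (p1 B) z :=
    (hB.contDiffAt (hU.mem_nhds hz)).differentiableAt_fderiv_apply (1, 0)
  have hu₁' : DifferentiableAt ℝ (p1 u) z :=
    DifferentiableAt.congr_of_eventuallyEq (by fun_prop) hu₁
  have hβt : p2 (fun w => exp (u w)) z = exp (u z) * p2 u z := by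
    simp [p2, pd2, fderiv_exp hu.self_of_nhds]
  have hβyy : p1 (p1 fun w => exp (u w)) z = exp (u z) * (p1 (p1 u) z + p1 u z * p1 u z) :=
    fderiv_fderiv_exp_apply hu hu₁' (1, 0)
  have hut : p2 u z = -(p2 B z + deriv κ z.2) / μ := by
    simp only [p2, pd2, u, fderiv_coleHopfExponent_apply (hdiff z hz).1 (hdiff z hz).2]
    simp
  have huyy : p1 (p1 u) z = -p1 (p1 B) z / μ := by
    show fderiv ℝ _ z (1, 0) = _
    have hd : HasFDerivAt (fun w => -p1 B w / μ) (-(μ⁻¹ • fderiv ℝ (p1 B) z)) z := by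
      simpa [div_eq_mul_inv, neg_mul, mul_comm] using (hB₁.hasFDerivAt.const_mul (-μ⁻¹))
    rw [hu₁.fderiv_eq, hd.fderiv]
    simp [p1, pd2, div_eq_mul_inv, mul_comm]
  rw [hβt, hβyy, hut, huyy, hu₁.self_of_nhds]
  simp only [u]
  field_simp
  ring

end ColeHopf

theorem stmt10_general (J K : Set ℝ)
    (hJo : IsOpen J)
    (hKo : IsOpen K)
    (μ : ℝ) (hμ : μ ≠ 0) (κ ρ : ℝ → ℝ)
    (hκ : DifferentiableOn ℝ κ K) (hρ : DifferentiableOn ℝ ρ K)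
    (B : ℝ × ℝ → ℝ) (hB : ContDiffOn ℝ 2 B (J ×ˢ K))
    (hG : ∀ p > (0 : ℝ), ∀ y ∈ J, ∀ t ∈ K,
      let A : ℝ × ℝ → ℝ := fun z => μ * (z.1 * Real.log z.1 - z.1) + κ z.2 * z.1 + ρ z.2
      let G : ℝ × ℝ × ℝ → ℝ := fun r => A (r.1, r.2.2) + r.1 * B (r.2.1, r.2.2)
      (px (py G) (p, y, t)) ^ 2 - py (py G) (p, y, t) * px (px G) (p, y, t)
        - pt (px G) (p, y, t) = 0) :
    ∀ y ∈ J, ∀ t ∈ K,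
      let β : ℝ × ℝ → ℝ := fun z => Real.exp (-(B z + κ z.2) / μ)
      p2 β (y, t) + μ * p1 (p1 β) (y, t) = 0 := by
  intro y hy t ht β
  have hz : (y, t) ∈ J ×ˢ K := ⟨hy, ht⟩
  have hB₁ : DifferentiableAt ℝ (p1 B) (y, t) :=
    (hB.contDiffAt ((hJo.prod hKo).mem_nhds hz)).differentiableAt_fderiv_apply (1, 0)
  have hBeq : p1 B (y, t) ^ 2 - μ * p1 (p1 B) (y, t) - deriv κ t - p2 B (y, t) = 0 :=
    (gEquation_separatedG (r := (1, y, t)) hJo hKo hκ hρ (hB.differentiableOn (by norm_num)) hB₁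
      one_pos hz).symm.trans (hG 1 one_pos y hy t ht)
  rw [backwardHeat_coleHopf hJo hKo hμ hκ hB hz, hBeq, mul_zero]

/-- If `A(p,t) = μ(p ln p - p) + κ(t) p + ρ(t)` with `μ ≠ 0`, `κ`, `ρ` differentiable
on the open interval `K`, `B(y,t)` is C² on `J × K`, and `G = A + p·B` satisfies the
G-equation `G_{yp}² - G_{yy} G_{pp} - G_{pt} = 0` on `(0,∞) × J × K`, then
`β(y,t) = exp(-(B(y,t) + κ(t))/μ)` satisfies `β_t + μ β_{yy} = 0` on `J × K`. -/
theorem stmt10 (J K : Set ℝ)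
    (hJo : IsOpen J) (hJc : J.OrdConnected)
    (hKo : IsOpen K) (hKc : K.OrdConnected)
    (μ : ℝ) (hμ : μ ≠ 0) (κ ρ : ℝ → ℝ)
    (hκ : DifferentiableOn ℝ κ K) (hρ : DifferentiableOn ℝ ρ K)
    (B : ℝ × ℝ → ℝ) (hB : ContDiffOn ℝ 2 B (J ×ˢ K))
    (hG : ∀ p > (0 : ℝ), ∀ y ∈ J, ∀ t ∈ K,
      let A : ℝ × ℝ → ℝ := fun z => μ * (z.1 * Real.log z.1 - z.1) + κ z.2 * z.1 + ρ z.2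
      let G : ℝ × ℝ × ℝ → ℝ := fun r => A (r.1, r.2.2) + r.1 * B (r.2.1, r.2.2)
      (px (py G) (p, y, t)) ^ 2 - py (py G) (p, y, t) * px (px G) (p, y, t)
        - pt (px G) (p, y, t) = 0) :
    ∀ y ∈ J, ∀ t ∈ K,
      let β : ℝ × ℝ → ℝ := fun z => Real.exp (-(B z + κ z.2) / μ)
      p2 β (y, t) + μ * p1 (p1 β) (y, t) = 0 :=
  stmt10_general J K hJo hKo μ hμ κ ρ hκ hρ B hB hG
end

section
/- Let A : (0,∞) × (0,∞) → ℝ be C² and let c₂, c₃ : (0,∞) → ℝ be differentiable. Suppose G(p,y,t) = A(p,t) + p·(−y²/(4t) + c₂(t)y + c₃(t)) satisfies the G-equation G_{yp}² − G_{yy} G_{pp} − G_{pt} = 0 for all p ∈ (0,∞), y ∈ ℝ, t ∈ (0,∞). Then there exists a constant c ∈ ℝ with c₂(t) = c/t for all t > 0, and the function Ã(p,t) = A(p,t) + p·c₃(t) satisfies t·p·Ã_{pp} − 2t²·Ã_{pt} + 2c² = 0 for all p, t > 0. -/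
/-! With `B(y,t) = -y²/(4t) + c₂(t) y + c₃(t)` and `G = A + p B` one finds `G_{yp} = c₂ - y/(2t)`,
`G_{yy} = -p/(2t)`, `G_{pp} = A_{pp}` and `G_{pt} = A_{pt} + B_t`. The `y²` terms cancel, so the
G-equation is affine in `y`:
`-(c₂' + c₂/t) y + (c₂² + p A_{pp}/(2t) - A_{pt} - c₃') = 0`.
The `y`-coefficient says `(t c₂)' = 0`, i.e. `c₂ = c/t`; the constant term times `2t²` is the
equation for `Ã`, because `Ã_{pp} = A_{pp}` and `Ã_{pt} = A_{pt} + c₃'`.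

Each partial derivative is computed as the derivative of a one-variable restriction; second
derivatives are taken of the closed forms that the first ones have on a neighbourhood. -/

open Filter Topology

section CoordinateDerivatives

variable {f : ℝ × ℝ × ℝ → ℝ} {g : ℝ × ℝ → ℝ} {p y t : ℝ}

lemma hasDerivAt_px (hf : DifferentiableAt ℝ f (p, y, t)) :
    HasDerivAt (fun s => f (s, y, t)) (px f (p, y, t)) p :=
  hf.hasFDerivAt.comp_hasDerivAt p ((hasDerivAt_id p).prodMk (hasDerivAt_const p (y, t)))

lemma hasDerivAt_py (hf : DifferentiableAt ℝ f (p, y, t)) :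
    HasDerivAt (fun s => f (p, s, t)) (py f (p, y, t)) y :=
  hf.hasFDerivAt.comp_hasDerivAt y
    ((hasDerivAt_const y p).prodMk ((hasDerivAt_id y).prodMk (hasDerivAt_const y t)))

lemma hasDerivAt_pt (hf : DifferentiableAt ℝ f (p, y, t)) :
    HasDerivAt (fun s => f (p, y, s)) (pt f (p, y, t)) t :=
  hf.hasFDerivAt.comp_hasDerivAt t
    ((hasDerivAt_const t p).prodMk ((hasDerivAt_const t y).prodMk (hasDerivAt_id t)))

lemma hasDerivAt_p1_s15 (hg : DifferentiableAt ℝ g (p, t)) :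
    HasDerivAt (fun s => g (s, t)) (p1 g (p, t)) p :=
  hg.hasFDerivAt.comp_hasDerivAt p ((hasDerivAt_id p).prodMk (hasDerivAt_const p t))

lemma hasDerivAt_p2_s15 (hg : DifferentiableAt ℝ g (p, t)) :
    HasDerivAt (fun s => g (p, s)) (p2 g (p, t)) t :=
  hg.hasFDerivAt.comp_hasDerivAt t ((hasDerivAt_const t p).prodMk (hasDerivAt_id t))

lemma Filter.EventuallyEq.pd_eq_s15 {f₁ f₂ : ℝ × ℝ × ℝ → ℝ} {q : ℝ × ℝ × ℝ} (h : f₁ =ᶠ[𝓝 q] f₂)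
    (v : ℝ × ℝ × ℝ) : pd v f₁ q = pd v f₂ q := by
  simp only [pd, h.fderiv_eq]

lemma Filter.EventuallyEq.pd2_eq {g₁ g₂ : ℝ × ℝ → ℝ} {z : ℝ × ℝ} (h : g₁ =ᶠ[𝓝 z] g₂)
    (v : ℝ × ℝ) : pd2 v g₁ z = pd2 v g₂ z := by
  simp only [pd2, h.fderiv_eq]

lemma ContDiffAt.differentiableAt_p1 {z : ℝ × ℝ} (hg : ContDiffAt ℝ 2 g z) :
    DifferentiableAt ℝ (p1 g) z :=
  ((hg.fderiv_right (m := 1) (by norm_num)).differentiableAt one_ne_zero).clm_apply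
    (differentiableAt_const _)

lemma ContDiffAt.eventually_differentiableAt {z : ℝ × ℝ} (hg : ContDiffAt ℝ 2 g z) :
    ∀ᶠ w in 𝓝 z, DifferentiableAt ℝ g w :=
  (hg.eventually (by simp)).mono fun _ hw => hw.differentiableAt two_ne_zero

end CoordinateDerivatives

section ClassC

variable {A : ℝ × ℝ → ℝ} {c₂ c₃ : ℝ → ℝ} {p y t : ℝ}

noncomputable def classCB (c₂ c₃ : ℝ → ℝ) (y t : ℝ) : ℝ :=
  -(y ^ 2) / (4 * t) + c₂ t * y + c₃ t

noncomputable def classCG (A : ℝ × ℝ → ℝ) (c₂ c₃ : ℝ → ℝ) (r : ℝ × ℝ × ℝ) : ℝ :=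
  A (r.1, r.2.2) + r.1 * classCB c₂ c₃ r.2.1 r.2.2

lemma hasDerivAt_classCB_left (c₂ c₃ : ℝ → ℝ) (ht : t ≠ 0) :
    HasDerivAt (fun s => classCB c₂ c₃ s t) (c₂ t - y / (2 * t)) y := by
  have h := (((hasDerivAt_pow 2 y).neg.div_const (4 * t)).add
    ((hasDerivAt_id y).const_mul (c₂ t))).add_const (c₃ t)
  refine h.congr_deriv ?_
  field_simp
  ring

lemma hasDerivAt_classCB_right (hc₂ : DifferentiableAt ℝ c₂ t)
    (hc₃ : DifferentiableAt ℝ c₃ t) (ht : t ≠ 0) :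
    HasDerivAt (classCB c₂ c₃ y) (y ^ 2 / (4 * t ^ 2) + deriv c₂ t * y + deriv c₃ t) t := by
  have h := (((hasDerivAt_id t).const_mul 4).inv (by simpa using ht)).const_mul (-(y ^ 2))
    |>.add (hc₂.hasDerivAt.mul_const y) |>.add hc₃.hasDerivAt
  refine h.congr_deriv ?_
  simp only [id]
  field_simp

lemma differentiableAt_classCG (hA : DifferentiableAt ℝ A (p, t))
    (hc₂ : DifferentiableAt ℝ c₂ t) (hc₃ : DifferentiableAt ℝ c₃ t) (ht : t ≠ 0) :
    DifferentiableAt ℝ (classCG A c₂ c₃) (p, y, t) := by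
  unfold classCG classCB
  fun_prop (disch := simp [ht])

lemma py_classCG (hA : DifferentiableAt ℝ A (p, t))
    (hc₂ : DifferentiableAt ℝ c₂ t) (hc₃ : DifferentiableAt ℝ c₃ t) (ht : t ≠ 0) :
    py (classCG A c₂ c₃) (p, y, t) = p * (c₂ t - y / (2 * t)) :=
  (hasDerivAt_py (differentiableAt_classCG hA hc₂ hc₃ ht)).unique
    (((hasDerivAt_classCB_left c₂ c₃ ht).const_mul p).const_add (A (p, t)))

lemma px_classCG (hA : DifferentiableAt ℝ A (p, t))
    (hc₂ : DifferentiableAt ℝ c₂ t) (hc₃ : DifferentiableAt ℝ c₃ t) (ht : t ≠ 0) :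
    px (classCG A c₂ c₃) (p, y, t) = p1 A (p, t) + classCB c₂ c₃ y t :=
  (hasDerivAt_px (differentiableAt_classCG hA hc₂ hc₃ ht)).unique
    (((hasDerivAt_p1_s15 hA).add ((hasDerivAt_id p).mul_const (classCB c₂ c₃ y t))).congr_deriv
      (by simp))

lemma eventually_classC_regular (hA : ∀ᶠ z in 𝓝 (p, t), DifferentiableAt ℝ A z)
    (hc₂ : ∀ᶠ s in 𝓝 t, DifferentiableAt ℝ c₂ s) (hc₃ : ∀ᶠ s in 𝓝 t, DifferentiableAt ℝ c₃ s)
    (ht : t ≠ 0) :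
    ∀ᶠ r in 𝓝 (p, y, t), DifferentiableAt ℝ A (r.1, r.2.2) ∧ DifferentiableAt ℝ c₂ r.2.2 ∧
      DifferentiableAt ℝ c₃ r.2.2 ∧ r.2.2 ≠ 0 := by
  have hpt : Tendsto (fun r : ℝ × ℝ × ℝ => (r.1, r.2.2)) (𝓝 (p, y, t)) (𝓝 (p, t)) :=
    (continuous_fst.prodMk continuous_snd.snd).tendsto _
  have ht' : Tendsto (fun r : ℝ × ℝ × ℝ => r.2.2) (𝓝 (p, y, t)) (𝓝 t) :=
    continuous_snd.snd.tendsto _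
  exact (hpt.eventually hA).and <| (ht'.eventually hc₂).and <| (ht'.eventually hc₃).and <|
    ht'.eventually (eventually_ne_nhds ht)

lemma py_classCG_eventuallyEq (hA : ∀ᶠ z in 𝓝 (p, t), DifferentiableAt ℝ A z)
    (hc₂ : ∀ᶠ s in 𝓝 t, DifferentiableAt ℝ c₂ s) (hc₃ : ∀ᶠ s in 𝓝 t, DifferentiableAt ℝ c₃ s)
    (ht : t ≠ 0) :
    py (classCG A c₂ c₃) =ᶠ[𝓝 (p, y, t)] fun r => r.1 * (c₂ r.2.2 - r.2.1 / (2 * r.2.2)) := by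
  filter_upwards [eventually_classC_regular hA hc₂ hc₃ ht] with r ⟨hA', hc₂', hc₃', ht'⟩
  exact py_classCG hA' hc₂' hc₃' ht'

lemma px_classCG_eventuallyEq (hA : ∀ᶠ z in 𝓝 (p, t), DifferentiableAt ℝ A z)
    (hc₂ : ∀ᶠ s in 𝓝 t, DifferentiableAt ℝ c₂ s) (hc₃ : ∀ᶠ s in 𝓝 t, DifferentiableAt ℝ c₃ s)
    (ht : t ≠ 0) :
    px (classCG A c₂ c₃) =ᶠ[𝓝 (p, y, t)]
      fun r => p1 A (r.1, r.2.2) + classCB c₂ c₃ r.2.1 r.2.2 := by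
  filter_upwards [eventually_classC_regular hA hc₂ hc₃ ht] with r ⟨hA', hc₂', hc₃', ht'⟩
  exact px_classCG hA' hc₂' hc₃' ht'

lemma px_py_classCG (hA : ∀ᶠ z in 𝓝 (p, t), DifferentiableAt ℝ A z)
    (hc₂ : ∀ᶠ s in 𝓝 t, DifferentiableAt ℝ c₂ s) (hc₃ : ∀ᶠ s in 𝓝 t, DifferentiableAt ℝ c₃ s)
    (ht : t ≠ 0) :
    px (py (classCG A c₂ c₃)) (p, y, t) = c₂ t - y / (2 * t) := by
  have hc₂t := hc₂.self_of_nhds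
  refine ((py_classCG_eventuallyEq hA hc₂ hc₃ ht).pd_eq_s15 _).trans <|
    (hasDerivAt_px (by fun_prop (disch := simp [ht]))).unique
      (((hasDerivAt_id p).mul_const (c₂ t - y / (2 * t))).congr_deriv (one_mul _))

lemma py_py_classCG (hA : ∀ᶠ z in 𝓝 (p, t), DifferentiableAt ℝ A z)
    (hc₂ : ∀ᶠ s in 𝓝 t, DifferentiableAt ℝ c₂ s) (hc₃ : ∀ᶠ s in 𝓝 t, DifferentiableAt ℝ c₃ s)
    (ht : t ≠ 0) :
    py (py (classCG A c₂ c₃)) (p, y, t) = -(p / (2 * t)) := by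
  have hc₂t := hc₂.self_of_nhds
  refine ((py_classCG_eventuallyEq hA hc₂ hc₃ ht).pd_eq_s15 _).trans <|
    (hasDerivAt_py (by fun_prop (disch := simp [ht]))).unique
      ((((hasDerivAt_id y).div_const (2 * t)).const_sub (c₂ t)).const_mul p |>.congr_deriv ?_)
  ring

lemma px_px_classCG (hA : ContDiffAt ℝ 2 A (p, t))
    (hc₂ : ∀ᶠ s in 𝓝 t, DifferentiableAt ℝ c₂ s) (hc₃ : ∀ᶠ s in 𝓝 t, DifferentiableAt ℝ c₃ s)
    (ht : t ≠ 0) :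
    px (px (classCG A c₂ c₃)) (p, y, t) = p1 (p1 A) (p, t) := by
  have hc₂t := hc₂.self_of_nhds
  have hc₃t := hc₃.self_of_nhds
  have hA₁ := hA.differentiableAt_p1
  refine ((px_classCG_eventuallyEq hA.eventually_differentiableAt hc₂ hc₃ ht).pd_eq_s15 _).trans <|
    (hasDerivAt_px ?_).unique ((hasDerivAt_p1_s15 hA₁).add_const (classCB c₂ c₃ y t))
  unfold classCB
  fun_prop (disch := simp [ht])

lemma pt_px_classCG (hA : ContDiffAt ℝ 2 A (p, t))
    (hc₂ : ∀ᶠ s in 𝓝 t, DifferentiableAt ℝ c₂ s) (hc₃ : ∀ᶠ s in 𝓝 t, DifferentiableAt ℝ c₃ s)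
    (ht : t ≠ 0) :
    pt (px (classCG A c₂ c₃)) (p, y, t)
      = p2 (p1 A) (p, t) + (y ^ 2 / (4 * t ^ 2) + deriv c₂ t * y + deriv c₃ t) := by
  have hc₂t := hc₂.self_of_nhds
  have hc₃t := hc₃.self_of_nhds
  have hA₁ := hA.differentiableAt_p1
  refine ((px_classCG_eventuallyEq hA.eventually_differentiableAt hc₂ hc₃ ht).pd_eq_s15 _).trans <|
    (hasDerivAt_pt ?_).unique ((hasDerivAt_p2_s15 hA₁).add (hasDerivAt_classCB_right hc₂t hc₃t ht))
  unfold classCB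
  fun_prop (disch := simp [ht])

lemma gOperator_classCG (hA : ContDiffAt ℝ 2 A (p, t))
    (hc₂ : ∀ᶠ s in 𝓝 t, DifferentiableAt ℝ c₂ s) (hc₃ : ∀ᶠ s in 𝓝 t, DifferentiableAt ℝ c₃ s)
    (ht : t ≠ 0) :
    px (py (classCG A c₂ c₃)) (p, y, t) ^ 2
        - py (py (classCG A c₂ c₃)) (p, y, t) * px (px (classCG A c₂ c₃)) (p, y, t)
        - pt (px (classCG A c₂ c₃)) (p, y, t)
      = -(deriv c₂ t + c₂ t / t) * y
        + (c₂ t ^ 2 + p / (2 * t) * p1 (p1 A) (p, t) - p2 (p1 A) (p, t) - deriv c₃ t) := by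
  have hA₁ := hA.eventually_differentiableAt
  rw [px_py_classCG hA₁ hc₂ hc₃ ht, py_py_classCG hA₁ hc₂ hc₃ ht, px_px_classCG hA hc₂ hc₃ ht,
    pt_px_classCG hA hc₂ hc₃ ht]
  field_simp
  ring

end ClassC

section AddFstMul

variable {A : ℝ × ℝ → ℝ} {c : ℝ → ℝ} {p t : ℝ}

lemma p1_add_fst_mul (hA : DifferentiableAt ℝ A (p, t)) (hc : DifferentiableAt ℝ c t) :
    p1 (fun z => A z + z.1 * c z.2) (p, t) = p1 A (p, t) + c t :=
  (hasDerivAt_p1_s15 (by fun_prop)).unique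
    (((hasDerivAt_p1_s15 hA).add ((hasDerivAt_id p).mul_const (c t))).congr_deriv (by simp))

lemma p1_add_fst_mul_eventuallyEq (hA : ∀ᶠ z in 𝓝 (p, t), DifferentiableAt ℝ A z)
    (hc : ∀ᶠ s in 𝓝 t, DifferentiableAt ℝ c s) :
    p1 (fun z => A z + z.1 * c z.2) =ᶠ[𝓝 (p, t)] fun z => p1 A z + c z.2 := by
  filter_upwards [hA, (continuous_snd.tendsto (p, t)).eventually hc] with z hA' hc'
  exact p1_add_fst_mul hA' hc'

lemma p1_p1_add_fst_mul (hA : ContDiffAt ℝ 2 A (p, t))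
    (hc : ∀ᶠ s in 𝓝 t, DifferentiableAt ℝ c s) :
    p1 (p1 (fun z => A z + z.1 * c z.2)) (p, t) = p1 (p1 A) (p, t) := by
  have hct := hc.self_of_nhds
  have hA₁ := hA.differentiableAt_p1
  exact ((p1_add_fst_mul_eventuallyEq hA.eventually_differentiableAt hc).pd2_eq _).trans <|
    (hasDerivAt_p1_s15 (by fun_prop)).unique ((hasDerivAt_p1_s15 hA₁).add_const (c t))

lemma p2_p1_add_fst_mul (hA : ContDiffAt ℝ 2 A (p, t))
    (hc : ∀ᶠ s in 𝓝 t, DifferentiableAt ℝ c s) :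
    p2 (p1 (fun z => A z + z.1 * c z.2)) (p, t) = p2 (p1 A) (p, t) + deriv c t := by
  have hct := hc.self_of_nhds
  have hA₁ := hA.differentiableAt_p1
  exact ((p1_add_fst_mul_eventuallyEq hA.eventually_differentiableAt hc).pd2_eq _).trans <|
    (hasDerivAt_p2_s15 (by fun_prop)).unique ((hasDerivAt_p2_s15 hA₁).add hct.hasDerivAt)

end AddFstMul

open Set in
lemma exists_eq_div_of_deriv_add_div_eq_zero {f : ℝ → ℝ} (hf : DifferentiableOn ℝ f (Ioi 0))
    (h : ∀ t > 0, deriv f t + f t / t = 0) : ∃ c, ∀ t > 0, f t = c / t := by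
  have hderiv : ∀ t > 0, HasDerivAt (fun s => s * f s) 0 t := fun t ht => by
    have hft := (hf.differentiableAt (Ioi_mem_nhds ht)).hasDerivAt
    refine ((hasDerivAt_id t).mul hft).congr_deriv ?_
    have := h t ht
    field_simp at this
    simp only [id]
    linarith
  refine ⟨f 1, fun t ht => ?_⟩
  have hconst : t * f t = 1 * f 1 := isOpen_Ioi.is_const_of_deriv_eq_zero isPreconnected_Ioi
    (fun s hs => (hderiv s hs).differentiableAt.differentiableWithinAt)
    (fun s hs => (hderiv s hs).deriv) (mem_Ioi.2 ht) (mem_Ioi.2 one_pos)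
  rw [eq_div_iff ht.ne', mul_comm, hconst, one_mul]

/-- Class C branch: if `A(p,t)` is C² on `(0,∞) × (0,∞)`, `c₂, c₃` are differentiable
on `(0,∞)`, and `G(p,y,t) = A(p,t) + p(-y²/(4t) + c₂(t)y + c₃(t))` satisfies the
G-equation `G_{yp}² - G_{yy} G_{pp} - G_{pt} = 0` for all `p > 0`, `y ∈ ℝ`, `t > 0`,
then `c₂(t) = c/t` for a constant `c`, and `Ã(p,t) = A(p,t) + p c₃(t)` satisfies
`t p Ã_{pp} - 2t² Ã_{pt} + 2c² = 0` for all `p, t > 0`. -/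
theorem stmt15 (A : ℝ × ℝ → ℝ)
    (hA : ContDiffOn ℝ 2 A (Set.Ioi (0 : ℝ) ×ˢ Set.Ioi (0 : ℝ)))
    (c₂ c₃ : ℝ → ℝ)
    (hc₂ : DifferentiableOn ℝ c₂ (Set.Ioi (0 : ℝ)))
    (hc₃ : DifferentiableOn ℝ c₃ (Set.Ioi (0 : ℝ)))
    (hG : ∀ p > (0 : ℝ), ∀ y : ℝ, ∀ t > (0 : ℝ),
      let G : ℝ × ℝ × ℝ → ℝ := fun r =>
        A (r.1, r.2.2) + r.1 * (-(r.2.1 ^ 2) / (4 * r.2.2) + c₂ r.2.2 * r.2.1 + c₃ r.2.2)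
      (px (py G) (p, y, t)) ^ 2 - py (py G) (p, y, t) * px (px G) (p, y, t)
        - pt (px G) (p, y, t) = 0) :
    ∃ c : ℝ, (∀ t > (0 : ℝ), c₂ t = c / t) ∧
      ∀ p > (0 : ℝ), ∀ t > (0 : ℝ),
        let Atil : ℝ × ℝ → ℝ := fun z => A z + z.1 * c₃ z.2
        t * p * p1 (p1 Atil) (p, t) - 2 * t ^ 2 * p2 (p1 Atil) (p, t) + 2 * c ^ 2 = 0 := by
  have hAt : ∀ p > (0 : ℝ), ∀ t > (0 : ℝ), ContDiffAt ℝ 2 A (p, t) := fun p hp t ht =>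
    hA.contDiffAt (prod_mem_nhds (Ioi_mem_nhds hp) (Ioi_mem_nhds ht))
  have hc₂t : ∀ t > (0 : ℝ), ∀ᶠ s in 𝓝 t, DifferentiableAt ℝ c₂ s := fun t ht =>
    hc₂.eventually_differentiableAt (Ioi_mem_nhds ht)
  have hc₃t : ∀ t > (0 : ℝ), ∀ᶠ s in 𝓝 t, DifferentiableAt ℝ c₃ s := fun t ht =>
    hc₃.eventually_differentiableAt (Ioi_mem_nhds ht)
  have hcoeffs : ∀ p > (0 : ℝ), ∀ t > (0 : ℝ), deriv c₂ t + c₂ t / t = 0 ∧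
      c₂ t ^ 2 + p / (2 * t) * p1 (p1 A) (p, t) - p2 (p1 A) (p, t) - deriv c₃ t = 0 := by
    intro p hp t ht
    have h := fun y => (gOperator_classCG (y := y) (hAt p hp t ht) (hc₂t t ht) (hc₃t t ht)
      ht.ne').symm.trans (hG p hp y t ht)
    have h₀ := h 0
    have h₁ := h 1
    constructor <;> linarith
  obtain ⟨c, hc₂c⟩ :=
    exists_eq_div_of_deriv_add_div_eq_zero hc₂ fun t ht => (hcoeffs 1 one_pos t ht).1
  refine ⟨c, hc₂c, fun p hp t ht => ?_⟩
  dsimp only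
  rw [p1_p1_add_fst_mul (hAt p hp t ht) (hc₃t t ht),
    p2_p1_add_fst_mul (hAt p hp t ht) (hc₃t t ht)]
  have h := (hcoeffs p hp t ht).2
  rw [hc₂c t ht] at h
  field_simp at h
  linear_combination h
end

section
/- Define H(x,y,t) = (y² − 4xt)^{−1/2} on {y² − 4xt > 0}, and for p > 0, t > 0, y ∈ ℝ define x(p,y,t) = y²/(4t) − 2^{−4/3}·(t·p²)^{−1/3}. Then y² − 4·x(p,y,t)·t = (2t/p)^{2/3} > 0 and H_x(x(p,y,t), y, t) = p; that is, the fundamental solution H = (y²−4xt)^{−1/2} corresponds under Legendre transform to the Class C data A_p = 2^{−4/3}(t p²)^{−1/3}, B = −y²/(4t). -/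
theorem px_eq_of_hasDerivAt {f : ℝ × ℝ × ℝ → ℝ} {x y t d : ℝ}
    (hf : DifferentiableAt ℝ f (x, y, t)) (h : HasDerivAt (fun s => f (s, y, t)) d x) :
    px f (x, y, t) = d :=
  (hf.hasFDerivAt.comp_hasDerivAt x ((hasDerivAt_id x).prodMk (hasDerivAt_const x (y, t)))).unique h

theorem hasDerivAt_rpow_neg_half_discr {x y t : ℝ} (hu : 0 < y ^ 2 - 4 * x * t) :
    HasDerivAt (fun s => (y ^ 2 - 4 * s * t) ^ (-(1 / 2 : ℝ)))
      (2 * t * (y ^ 2 - 4 * x * t) ^ (-(3 / 2 : ℝ))) x := by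
  have hlin : HasDerivAt (fun s => y ^ 2 - 4 * s * t) (-(4 * t)) x := by
    simpa using ((hasDerivAt_id x).const_mul 4 |>.mul_const t).const_sub (y ^ 2)
  convert hlin.rpow_const (p := -(1 / 2 : ℝ)) (Or.inl hu.ne') using 1
  rw [show -(1 / 2 : ℝ) - 1 = -(3 / 2) by norm_num]
  ring

theorem px_rpow_neg_half_discr {x y t : ℝ} (hu : 0 < y ^ 2 - 4 * x * t) :
    px (fun q => (q.2.1 ^ 2 - 4 * q.1 * q.2.2) ^ (-(1 / 2 : ℝ))) (x, y, t) =
      2 * t * (y ^ 2 - 4 * x * t) ^ (-(3 / 2 : ℝ)) := by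
  refine px_eq_of_hasDerivAt ?_ (hasDerivAt_rpow_neg_half_discr hu)
  exact DifferentiableAt.rpow_const (by fun_prop) (Or.inl hu.ne')

theorem four_mul_mul_rpow_neg_third_eq {t p : ℝ} (ht : 0 < t) (hp : 0 < p) :
    4 * t * ((2 : ℝ) ^ (-(4 / 3 : ℝ)) * (t * p ^ 2) ^ (-(1 / 3 : ℝ))) =
      (2 * t / p) ^ ((2 : ℝ) / 3) := by
  rw [← pow_left_inj₀ (by positivity) (by positivity) three_ne_zero]
  simp only [mul_pow, ← Real.rpow_mul_natCast (by norm_num : (0 : ℝ) ≤ 2),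
    ← Real.rpow_mul_natCast (by positivity : 0 ≤ t * p ^ 2),
    ← Real.rpow_mul_natCast (by positivity : 0 ≤ 2 * t / p)]
  norm_num [Real.rpow_neg_one]
  field_simp
  norm_num

/-- For `H(x,y,t) = (y² - 4xt)^(-1/2)` and
`x(p,y,t) = y²/(4t) - 2^(-4/3) (t p²)^(-1/3)` (with `p > 0`, `t > 0`), one has
`y² - 4 x(p,y,t) t = (2t/p)^(2/3) > 0` and `H_x(x(p,y,t), y, t) = p`: the
fundamental solution corresponds to the Class C data
`A_p = 2^(-4/3)(t p²)^(-1/3)`, `B = -y²/(4t)`. -/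
theorem stmt18 :
    let H : ℝ × ℝ × ℝ → ℝ := fun q => (q.2.1 ^ 2 - 4 * q.1 * q.2.2) ^ (-(1 / 2 : ℝ))
    let x : ℝ × ℝ × ℝ → ℝ := fun q =>
      q.2.1 ^ 2 / (4 * q.2.2) - (2 : ℝ) ^ (-(4 / 3 : ℝ)) * (q.2.2 * q.1 ^ 2) ^ (-(1 / 3 : ℝ))
    ∀ p > (0 : ℝ), ∀ y : ℝ, ∀ t > (0 : ℝ),
      (y ^ 2 - 4 * x (p, y, t) * t = (2 * t / p) ^ ((2 : ℝ) / 3) ∧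
        0 < (2 * t / p) ^ ((2 : ℝ) / 3)) ∧
      px H (x (p, y, t), y, t) = p := by
  intro H x p hp y t ht
  have hc : 0 < 2 * t / p := by positivity
  have hdiscr : y ^ 2 - 4 * x (p, y, t) * t = (2 * t / p) ^ ((2 : ℝ) / 3) := by
    rw [← four_mul_mul_rpow_neg_third_eq ht hp]
    simp only [x]
    field_simp
    ring
  refine ⟨⟨hdiscr, Real.rpow_pos_of_pos hc _⟩, ?_⟩
  have hpow : ((2 * t / p) ^ ((2 : ℝ) / 3)) ^ (-(3 / 2 : ℝ)) = p / (2 * t) := by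
    rw [← Real.rpow_mul hc.le, show (2 : ℝ) / 3 * -(3 / 2) = -1 by norm_num, Real.rpow_neg_one,
      inv_div]
  rw [px_rpow_neg_half_discr (hdiscr ▸ Real.rpow_pos_of_pos hc _), hdiscr, hpow]
  field_simp
end
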